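/- The group G has a linear isodiametric function: there exists a constant C > 0 such that for every word w in the free group F on {θ1, θ2, a, k} whose image in G is trivial, w is equal in F to a product of finitely many elements of the form xᵢ⁻¹·rᵢ^{±1}·xᵢ, where each rᵢ is one of the four defining relators and each conjugator satisfies |xᵢ| ≤ C·|w| + C. -/

import Mathlib

/-- The four generators θ₁, θ₂, a, k of the free group `F` on four letters. -/
def theta1 : FreeGroup (Fin 4) := FreeGroup.of 0
def theta2 : FreeGroup (Fin 4) := FreeGroup.of 1
def aF : FreeGroup (Fin 4) := FreeGroup.of 2
def kF : FreeGroup (Fin 4) := FreeGroup.of 3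

/-- The four defining relators θᵢ⁻¹aθᵢa⁻¹ and θᵢ⁻¹kθᵢa⁻¹k⁻¹, i = 1,2. -/
def rels : Set (FreeGroup (Fin 4)) :=
  {theta1⁻¹ * aF * theta1 * aF⁻¹, theta2⁻¹ * aF * theta2 * aF⁻¹,
   theta1⁻¹ * kF * theta1 * aF⁻¹ * kF⁻¹, theta2⁻¹ * kF * theta2 * aF⁻¹ * kF⁻¹}

/-- The group `G = ⟨θ₁, θ₂, a, k ∣ aᶿⁱ = a, kᶿⁱ = ka⟩`. -/
abbrev G : Type := PresentedGroup rels

/-- The quotient map `F → G`. -/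
def π : FreeGroup (Fin 4) →* G := PresentedGroup.mk rels

/-!
`G` is the semidirect product `F(a, k) ⋊ F(θ₁, θ₂)` in which both `θⱼ` act by the inverse
of `twist : a ↦ a, k ↦ k a`, so a word `w` is trivial in `G` exactly when its `θ`-part `θ(w)`
and its `(a, k)`-part `N(w)` are trivial.

Read `w` letter by letter, keeping `g · θ(g)⁻¹ ≡ N(g)` for the prefix `g` read so far.
Appending a letter `x ∈ {a, k}^{±1}` multiplies the left side by `θ(g) x θ(g)⁻¹`, which is
rewritten into `x` twisted by `θ(g)`: `a^{±1}` or `(k a^e)^{±1}` with `|e| ≤ |g|`. Pushing the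
`θ`-letters through one at a time uses conjugators of length `O(|g|)`, and all of this happens
to the right of `g · θ(g)⁻¹`, a word of length at most `2|g|` (never to the right of the normal
form `N(g)`, which may be quadratically long). So every conjugator has length `O(|w|)`.
-/

namespace FreeGroup

variable {α β : Type*} [DecidableEq α] [DecidableEq β]

theorem induction_on_norm {P : FreeGroup α → ℕ → Prop} (one : P 1 0)
    (of_mul : ∀ x n i, x.norm ≤ n → P x n →
      P (of i * x) (n + 1) ∧ P ((of i)⁻¹ * x) (n + 1))
    (z : FreeGroup α) : P z z.norm := by
  suffices h : ∀ L : List (α × Bool), P (mk L) L.length by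
    have := h z.toWord
    rwa [mk_toWord] at this
  intro L
  induction L with
  | nil => exact one
  | cons x L ih =>
    obtain ⟨i, _ | _⟩ := x
    · exact (of_mul _ _ i norm_mk_le ih).2
    · exact (of_mul _ _ i norm_mk_le ih).1

theorem induction_on_norm_right {P : FreeGroup α → ℕ → Prop} (one : P 1 0)
    (mul_of : ∀ x n i, x.norm ≤ n → P x n →
      P (x * of i) (n + 1) ∧ P (x * (of i)⁻¹) (n + 1))
    (z : FreeGroup α) : P z z.norm := by
  simpa only [inv_inv, norm_inv_eq] using
    induction_on_norm (P := fun x n => P x⁻¹ n) (by simpa using one)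
      (fun x n i hx h => by
        simpa only [mul_inv_rev, inv_inv, and_comm] using
          mul_of x⁻¹ n i (by rwa [norm_inv_eq]) h)
      z⁻¹

theorem norm_map_le (f : FreeGroup α →* FreeGroup β) {K : ℕ}
    (hf : ∀ i, (f (of i)).norm ≤ K) (z : FreeGroup α) : (f z).norm ≤ K * z.norm := by
  refine induction_on_norm (P := fun z n => (f z).norm ≤ K * n) (by simp) ?_ z
  intro x n i _ hx
  have hof := hf i
  have hinv : (f (of i)⁻¹).norm ≤ K := by rwa [_root_.map_inv, norm_inv_eq]
  constructor <;>
  · rw [_root_.map_mul, mul_add_one]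
    linarith [norm_mul_le (f (of i)) (f x), norm_mul_le (f (of i)⁻¹) (f x)]

theorem norm_conj_le (c x : FreeGroup α) : (c * x * c⁻¹).norm ≤ 2 * c.norm + x.norm := by
  have h₁ := norm_mul_le (c * x) c⁻¹
  have h₂ := norm_mul_le c x
  rw [norm_inv_eq] at h₁
  omega

theorem norm_of_zpow (a : α) (e : ℤ) : (of a ^ e).norm = e.natAbs := by
  rcases e with n | n
  · simp [norm_of_pow]
  · simp [zpow_negSucc, norm_inv_eq, norm_of_pow]

variable (R : Set (FreeGroup α))

def boundedConjugates (m : ℕ) : Set (FreeGroup α) :=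
  {g | ∃ x : FreeGroup α, x.norm ≤ m ∧
    ∃ r ∈ R, g = x⁻¹ * r * x ∨ g = x⁻¹ * r⁻¹ * x}

def boundedNormalClosure (m : ℕ) : Subgroup (FreeGroup α) :=
  Subgroup.closure (boundedConjugates R m)

variable {R}

theorem boundedNormalClosure_mono {m m' : ℕ} (h : m ≤ m') :
    boundedNormalClosure R m ≤ boundedNormalClosure R m' := by
  refine Subgroup.closure_mono ?_
  rintro g ⟨x, hx, r, hr, hg⟩
  exact ⟨x, hx.trans h, r, hr, hg⟩

theorem conj_mem_boundedNormalClosure {m : ℕ} {g : FreeGroup α} (c : FreeGroup α)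
    (hg : g ∈ boundedNormalClosure R m) :
    c * g * c⁻¹ ∈ boundedNormalClosure R (c.norm + m) := by
  have hmap : (boundedNormalClosure R m).map (MulAut.conj c).toMonoidHom ≤
      boundedNormalClosure R (c.norm + m) := by
    rw [boundedNormalClosure, MonoidHom.map_closure, Subgroup.closure_le]
    rintro _ ⟨g, ⟨x, hx, r, hr, hg⟩, rfl⟩
    refine Subgroup.subset_closure ⟨x * c⁻¹, ?_, r, hr, ?_⟩
    · exact (norm_mul_le _ _).trans (by rw [norm_inv_eq]; omega)
    · rcases hg with rfl | rfl <;> simp [mul_assoc]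
  exact hmap ⟨g, hg, rfl⟩

theorem exists_list_of_mem_boundedNormalClosure {m : ℕ} {g : FreeGroup α}
    (hg : g ∈ boundedNormalClosure R m) :
    ∃ L : List (FreeGroup α), L.prod = g ∧ ∀ h ∈ L, h ∈ boundedConjugates R m := by
  have hinv : (boundedConjugates R m)⁻¹ ⊆ boundedConjugates R m := by
    rintro _ ⟨x, hx, r, hr, h | h⟩ <;> refine ⟨x, hx, r, hr, ?_⟩ <;>
      simp [inv_eq_iff_eq_inv.1 h, mul_assoc]
  rw [← SetLike.mem_coe, boundedNormalClosure, ← Subgroup.coe_toSubmonoid,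
    Subgroup.closure_toSubmonoid, Set.union_eq_left.2 hinv] at hg
  obtain ⟨L, hL, rfl⟩ := Submonoid.exists_list_of_mem_closure hg
  exact ⟨L, rfl, hL⟩

variable (R) in
def RelEq (m : ℕ) (u v : FreeGroup α) : Prop :=
  u * v⁻¹ ∈ boundedNormalClosure R m

namespace RelEq

variable {m m' K : ℕ} {u v w : FreeGroup α}

theorem of_eq (h : u = v) : RelEq R m u v := by
  simp [RelEq, h]

theorem of_mul_inv_mem (h : u * v⁻¹ ∈ R) : RelEq R 0 u v :=
  Subgroup.subset_closure ⟨1, norm_one.le, _, h, Or.inl (by simp)⟩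

theorem mono (h : RelEq R m u v) (hm : m ≤ m') : RelEq R m' u v :=
  boundedNormalClosure_mono hm h

theorem symm (h : RelEq R m u v) : RelEq R m v u := by
  simpa [RelEq] using inv_mem h

theorem trans (h₁ : RelEq R m u v) (h₂ : RelEq R m v w) : RelEq R m u w := by
  simpa [RelEq, mul_assoc] using mul_mem h₁ h₂

theorem mul_right (h : RelEq R m u v) (c : FreeGroup α) : RelEq R m (u * c) (v * c) := by
  simpa [RelEq, mul_assoc] using h

theorem mul_left (h : RelEq R m u v) (c : FreeGroup α) :
    RelEq R (c.norm + m) (c * u) (c * v) := by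
  simpa [RelEq, mul_assoc] using conj_mem_boundedNormalClosure c h

theorem conj (h : RelEq R m u v) (c : FreeGroup α) :
    RelEq R (c.norm + m) (c * u * c⁻¹) (c * v * c⁻¹) :=
  (h.mul_left c).mul_right c⁻¹

theorem inv (h : RelEq R m u v) : RelEq R (u.norm + m) u⁻¹ v⁻¹ := by
  simpa [RelEq, mul_assoc] using conj_mem_boundedNormalClosure u⁻¹ (inv_mem h)

/-- Rewriting `f z` into `g z` one letter at a time, from the right: the left context is then a
value of `f` on a prefix of `z`. -/
theorem apply_of_forall_of {f g : FreeGroup β →* FreeGroup α}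
    (hfg : ∀ i, RelEq R m (f (of i)) (g (of i))) (hf : ∀ i, (f (of i)).norm ≤ K)
    (z : FreeGroup β) : RelEq R (K * (z.norm + 1) + m) (f z) (g z) := by
  refine induction_on_norm (P := fun z n => RelEq R (K * (n + 1) + m) (f z) (g z))
    (of_eq (by simp)) ?_ z
  intro x n i _ hx
  have step : ∀ ℓ, RelEq R (K + m) (f ℓ) (g ℓ) → (f ℓ).norm ≤ K →
      RelEq R (K * (n + 1 + 1) + m) (f (ℓ * x)) (g (ℓ * x)) := fun ℓ hℓ hnorm => by
    simp only [_root_.map_mul]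
    exact ((hx.mul_left (f ℓ)).mono (by nlinarith)).trans
      ((hℓ.mul_right (g x)).mono (by nlinarith))
  constructor
  · exact step _ ((hfg i).mono (by omega)) (hf i)
  · have hinv := (hfg i).inv.mono (m' := K + m) (by have := hf i; omega)
    rw [← _root_.map_inv, ← _root_.map_inv] at hinv
    exact step _ hinv (by simpa using hf i)

end RelEq

end FreeGroup

open FreeGroup SemidirectProduct

namespace LinearIsodiametric

def inclAK : FreeGroup (Fin 2) →* FreeGroup (Fin 4) := FreeGroup.lift ![aF, kF]

def inclTheta : FreeGroup (Fin 2) →* FreeGroup (Fin 4) := FreeGroup.lift ![theta1, theta2]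

def twist : MulAut (FreeGroup (Fin 2)) :=
  MonoidHom.toMulEquiv (FreeGroup.lift ![of 0, of 1 * of 0])
    (FreeGroup.lift ![of 0, of 1 * (of 0)⁻¹])
    (by ext i; fin_cases i <;> simp) (by ext i; fin_cases i <;> simp)

@[simp] theorem twist_of_zero : twist (of 0) = of 0 := by simp [twist]
@[simp] theorem twist_of_one : twist (of 1) = of 1 * of 0 := by simp [twist]
@[simp] theorem twist_symm_of_zero : twist.symm (of 0) = of 0 := by simp [twist]
@[simp] theorem twist_symm_of_one : twist.symm (of 1) = of 1 * (of 0)⁻¹ := by simp [twist]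

def thetaAction : FreeGroup (Fin 2) →* MulAut (FreeGroup (Fin 2)) :=
  FreeGroup.lift fun _ => twist⁻¹

abbrev Model := FreeGroup (Fin 2) ⋊[thetaAction] FreeGroup (Fin 2)

def toModel : FreeGroup (Fin 4) →* Model :=
  FreeGroup.lift ![inr (of 0), inr (of 1), inl (of 0), inl (of 1)]

theorem inr_of_inv_mul_inl_mul_inr_of (j : Fin 2) (n : FreeGroup (Fin 2)) :
    (inr (of j) : Model)⁻¹ * inl n * inr (of j) = inl (twist n) := by
  rw [← _root_.map_inv, ← inl_aut_inv]
  simp [thetaAction]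

theorem toModel_rels : ∀ r ∈ rels, toModel r = 1 := by
  simp only [rels, Set.mem_insert_iff, Set.mem_singleton_iff]
  rintro r (rfl | rfl | rfl | rfl) <;>
    simp [toModel, theta1, theta2, aF, kF, inr_of_inv_mul_inl_mul_inr_of]

theorem toModel_eq_one {w : FreeGroup (Fin 4)} (hw : π w = 1) : toModel w = 1 :=
  Subgroup.normalClosure_le_normal (N := toModel.ker) (fun r hr => toModel_rels r hr)
    (PresentedGroup.mk_eq_one_iff.1 hw)

@[simp] theorem toModel_inclAK (z : FreeGroup (Fin 2)) : toModel (inclAK z) = inl z := by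
  change (toModel.comp inclAK) z = inl z
  congr 1
  refine FreeGroup.ext_hom _ _ fun i => ?_
  fin_cases i <;> simp [toModel, inclAK, aF, kF]

@[simp] theorem toModel_inclTheta (u : FreeGroup (Fin 2)) : toModel (inclTheta u) = inr u := by
  change (toModel.comp inclTheta) u = inr u
  congr 1
  refine FreeGroup.ext_hom _ _ fun i => ?_
  fin_cases i <;> simp [toModel, inclTheta, theta1, theta2]

theorem exists_of_eq_inclAK_mul_inclTheta (i : Fin 4) :
    ∃ z t : FreeGroup (Fin 2), z.norm ≤ 1 ∧
      of i = inclAK z * inclTheta t ∧ (of i)⁻¹ = inclAK z⁻¹ * inclTheta t⁻¹ := by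
  fin_cases i
  · exact ⟨1, of 0, by simp, by simp [inclTheta, theta1], by simp [inclTheta, theta1]⟩
  · exact ⟨1, of 1, by simp, by simp [inclTheta, theta2], by simp [inclTheta, theta2]⟩
  · exact ⟨of 0, 1, by simp, by simp [inclAK, aF], by simp [inclAK, aF]⟩
  · exact ⟨of 1, 1, by simp, by simp [inclAK, kF], by simp [inclAK, kF]⟩

theorem norm_inclTheta_le (u : FreeGroup (Fin 2)) : (inclTheta u).norm ≤ u.norm := by
  simpa using norm_map_le inclTheta (K := 1)
    (fun i => by fin_cases i <;> simp [inclTheta, theta1, theta2]) u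

theorem norm_toModel_right_le (g : FreeGroup (Fin 4)) : (toModel g).right.norm ≤ g.norm := by
  simpa using norm_map_le (rightHom.comp toModel) (K := 1)
    (fun i => by fin_cases i <;> simp [toModel]) g

theorem norm_twist_inv_le (z : FreeGroup (Fin 2)) : (twist⁻¹ z).norm ≤ 2 * z.norm := by
  refine norm_map_le (twist⁻¹ : MulAut _).toMonoidHom (fun i => ?_) z
  fin_cases i
  · simp
  · simpa using (FreeGroup.norm_mul_le _ _).trans (by simp)

theorem thetaAction_apply_of_zero (u : FreeGroup (Fin 2)) : thetaAction u (of 0) = of 0 := by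
  induction u using FreeGroup.induction_on with
  | C1 => simp
  | of j => simp [thetaAction]
  | inv_of j _ => simp [thetaAction]
  | mul x y hx hy => rw [_root_.map_mul, MulAut.mul_apply, hy, hx]

theorem exists_thetaAction_apply_of_one (u : FreeGroup (Fin 2)) :
    ∃ e : ℤ, e.natAbs ≤ u.norm ∧ thetaAction u (of 1) = of 1 * of 0 ^ e := by
  refine induction_on_norm
    (P := fun u n => ∃ e : ℤ, e.natAbs ≤ n ∧ thetaAction u (of 1) = of 1 * of 0 ^ e)
    ⟨0, by simp⟩ ?_ u
  rintro u n j - ⟨e, he, hu⟩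
  refine ⟨⟨e - 1, by omega, ?_⟩, ⟨e + 1, by omega, ?_⟩⟩ <;>
    rw [_root_.map_mul, MulAut.mul_apply, hu] <;> simp [thetaAction] <;> group

theorem norm_thetaAction_apply_of_le (u : FreeGroup (Fin 2)) (i : Fin 2) :
    (thetaAction u (of i)).norm ≤ u.norm + 1 := by
  fin_cases i
  · simp [thetaAction_apply_of_zero]
  · obtain ⟨e, he, hu⟩ := exists_thetaAction_apply_of_one u
    have := FreeGroup.norm_mul_le (of (1 : Fin 2)) (of 0 ^ e)
    simp only [norm_of, norm_of_zpow] at this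
    simp only [Fin.mk_one, hu]
    omega

theorem relEq_inclTheta_of_inv_conj (j : Fin 2) (z : FreeGroup (Fin 2)) :
    RelEq rels (3 * (z.norm + 1))
      ((inclTheta (of j))⁻¹ * inclAK z * inclTheta (of j)) (inclAK (twist z)) := by
  have h := RelEq.apply_of_forall_of (R := rels) (m := 0) (K := 3)
    (f := (MulAut.conj (inclTheta (of j))⁻¹).toMonoidHom.comp inclAK)
    (g := inclAK.comp twist.toMonoidHom) (fun i => RelEq.of_mul_inv_mem ?_) (fun i => ?_) z
  · simpa using h
  · fin_cases j <;> fin_cases i <;> simp [rels, inclTheta, inclAK, mul_assoc]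
  · refine (norm_conj_le _ _).trans ?_
    fin_cases j <;> fin_cases i <;> simp [inclTheta, inclAK, theta1, theta2, aF, kF]

theorem relEq_inclTheta_of_conj (j : Fin 2) (z : FreeGroup (Fin 2)) :
    RelEq rels (6 * (z.norm + 1))
      (inclTheta (of j) * inclAK z * (inclTheta (of j))⁻¹) (inclAK (twist⁻¹ z)) := by
  have h := (relEq_inclTheta_of_inv_conj j (twist⁻¹ z)).conj (inclTheta (of j))
  have hθ : (inclTheta (of j)).norm = 1 := by fin_cases j <;> simp [inclTheta, theta1, theta2]
  have hz := norm_twist_inv_le z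
  rw [show ∀ c x : FreeGroup (Fin 4), c * (c⁻¹ * x * c) * c⁻¹ = x from fun c x => by group,
    MulAut.apply_inv_self] at h
  refine (h.mono ?_).symm
  omega

theorem relEq_inclTheta_conj_of (u : FreeGroup (Fin 2)) (i : Fin 2) :
    RelEq rels (6 * (u.norm + 1))
      (inclTheta u * inclAK (of i) * (inclTheta u)⁻¹) (inclAK (thetaAction u (of i))) := by
  refine induction_on_norm (P := fun u n => RelEq rels (6 * (n + 1))
      (inclTheta u * inclAK (of i) * (inclTheta u)⁻¹) (inclAK (thetaAction u (of i))))
    (RelEq.of_eq (by simp)) ?_ u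
  intro u n j hu ih
  have hθ : (inclTheta (of j)).norm = 1 := by fin_cases j <;> simp [inclTheta, theta1, theta2]
  have hact := norm_thetaAction_apply_of_le u i
  constructor
  · have h₁ := (ih.conj (inclTheta (of j))).mono (m' := 6 * (n + 1 + 1)) (by omega)
    have h₂ := (relEq_inclTheta_of_conj j (thetaAction u (of i))).mono
      (m' := 6 * (n + 1 + 1)) (by omega)
    simpa [thetaAction, mul_assoc] using h₁.trans h₂
  · have h₁ := (ih.conj (inclTheta (of j))⁻¹).mono (m' := 6 * (n + 1 + 1)) (by simp; omega)
    have h₂ := (relEq_inclTheta_of_inv_conj j (thetaAction u (of i))).mono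
      (m' := 6 * (n + 1 + 1)) (by omega)
    rw [inv_inv] at h₁
    simpa [thetaAction, mul_assoc] using h₁.trans h₂

theorem relEq_inclTheta_conj (u z : FreeGroup (Fin 2)) :
    RelEq rels ((2 * u.norm + 1) * (z.norm + 1) + 6 * (u.norm + 1))
      (inclTheta u * inclAK z * (inclTheta u)⁻¹) (inclAK (thetaAction u z)) := by
  have h := RelEq.apply_of_forall_of (R := rels) (K := 2 * u.norm + 1)
    (f := (MulAut.conj (inclTheta u)).toMonoidHom.comp inclAK)
    (g := inclAK.comp (thetaAction u).toMonoidHom) (relEq_inclTheta_conj_of u) (fun i => ?_) z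
  · simpa using h
  · refine (norm_conj_le _ _).trans ?_
    have h₁ := norm_inclTheta_le u
    have h₂ : (inclAK (of i)).norm = 1 := by fin_cases i <;> simp [inclAK, aF, kF]
    omega

theorem relEq_inclAK_toModel_left (g : FreeGroup (Fin 4)) :
    RelEq rels (12 * g.norm)
      (g * (inclTheta (toModel g).right)⁻¹) (inclAK (toModel g).left) := by
  refine induction_on_norm_right (P := fun g n => RelEq rels (12 * n)
      (g * (inclTheta (toModel g).right)⁻¹) (inclAK (toModel g).left))
    (RelEq.of_eq (by simp)) ?_ g
  intro x n i hx ih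
  set Q := (toModel x).right
  have hQ : Q.norm ≤ n := (norm_toModel_right_le x).trans hx
  have hK : (x * (inclTheta Q)⁻¹).norm ≤ 2 * n := by
    have := FreeGroup.norm_mul_le x (inclTheta Q)⁻¹
    have := norm_inclTheta_le Q
    rw [norm_inv_eq] at *
    omega
  have step : ∀ z t : FreeGroup (Fin 2), z.norm ≤ 1 →
      RelEq rels (12 * (n + 1)) (x * (inclAK z * inclTheta t) *
        (inclTheta (toModel (x * (inclAK z * inclTheta t))).right)⁻¹)
        (inclAK (toModel (x * (inclAK z * inclTheta t))).left) := by
    intro z t hz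
    have h₁ := ((relEq_inclTheta_conj Q z).mul_left (x * (inclTheta Q)⁻¹)).mono
      (m' := 12 * (n + 1)) (by nlinarith)
    have h₂ := (ih.mul_right (inclAK (thetaAction Q z))).mono (m' := 12 * (n + 1)) (by omega)
    convert h₁.trans h₂ using 1
    · simp [Q]
      group
    · simp [Q]
  obtain ⟨z, t, hz, hof, hinv⟩ := exists_of_eq_inclAK_mul_inclTheta i
  rw [hinv, hof]
  exact ⟨step z t hz, step z⁻¹ t⁻¹ (by rwa [norm_inv_eq])⟩

theorem mem_boundedNormalClosure_of_π_eq_one {w : FreeGroup (Fin 4)} (hw : π w = 1) :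
    w ∈ boundedNormalClosure rels (12 * w.norm) := by
  simpa [toModel_eq_one hw, RelEq] using relEq_inclAK_toModel_left w

end LinearIsodiametric

theorem linear_isodiametric_function :
    ∃ C : ℕ, 0 < C ∧
      ∀ w : FreeGroup (Fin 4), π w = 1 →
        ∃ L : List (FreeGroup (Fin 4)),
          L.prod = w ∧
          ∀ g ∈ L, ∃ x : FreeGroup (Fin 4),
            FreeGroup.norm x ≤ C * FreeGroup.norm w + C ∧
            ∃ r ∈ rels, g = x⁻¹ * r * x ∨ g = x⁻¹ * r⁻¹ * x :=
  ⟨12, by norm_num, fun w hw => exists_list_of_mem_boundedNormalClosure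
    (boundedNormalClosure_mono (by omega)
      (LinearIsodiametric.mem_boundedNormalClosure_of_π_eq_one hw))⟩
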